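/- Let p ∈ (0,1), q = 1 - p, and let a, n be integers with a ≥ 1 and n ≥ a + 1. For k ∈ ℤ set η_k = 2πk·i/ln(q). Then |∑_{k∈ℤ, k≠0} ∏_{j=a}^{n} 1/(1 - η_k/j)| ≤ (a+1)²·(ln q)²/12. -/

import Mathlib

open Complex

/-- For `p ∈ (0,1)`, `q = 1-p`, integers `n ≥ a+1 ≥ 2` and
`η_k = 2πk·i/ln q`,
`|∑_{k∈ℤ, k≠0} ∏_{j=a}^{n} 1/(1 - η_k/j)| ≤ (a+1)²·(ln q)²/12`. -/
theorem fluctuation_sum_bound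
    (p : ℝ) (hp : p ∈ Set.Ioo (0 : ℝ) 1) (a n : ℕ) (ha : 1 ≤ a) (hn : a + 1 ≤ n) :
    ‖∑' k : {k : ℤ // k ≠ 0}, ∏ j ∈ Finset.Icc a n,
        (1 - (2 * Real.pi * ((k : ℤ) : ℂ) * Complex.I / (Real.log (1 - p) : ℂ)) / (j : ℂ))⁻¹‖
      ≤ ((a : ℝ) + 1) ^ 2 * Real.log (1 - p) ^ 2 / 12 := by
  obtain ⟨hp0, hp1⟩ := hp
  set L := Real.log (1 - p) with hLdef
  have hLneg : L < 0 := Real.log_neg (by linarith) (by linarith)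
  have hLne : L ≠ 0 := ne_of_lt hLneg
  have hπ : (0:ℝ) < Real.pi := Real.pi_pos
  set C : ℝ := (a:ℝ) * ((a:ℝ)+1) * L^2 / (4 * Real.pi^2) with hCdef
  set f : {k : ℤ // k ≠ 0} → ℂ := fun k => ∏ j ∈ Finset.Icc a n,
      (1 - (2 * Real.pi * (((k : ℤ) : ℤ) : ℂ) * Complex.I / (L : ℂ)) / (j : ℂ))⁻¹ with hfdef
  -- key pointwise bound
  have key : ∀ k : {k : ℤ // k ≠ 0}, ‖f k‖ ≤ C / (((k : ℤ) : ℝ))^2 := by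
    rintro ⟨k, hk⟩
    have hk0 : ((k:ℝ)) ≠ 0 := Int.cast_ne_zero.mpr hk
    have hkpos : 0 < |(k:ℝ)| := abs_pos.mpr hk0
    set r : ℕ → ℝ := fun j => 2 * Real.pi * (k:ℝ) / (L * j) with hrdef
    have hfactor : ∀ j : ℕ,
        (1 - (2 * Real.pi * ((k : ℤ) : ℂ) * Complex.I / (L : ℂ)) / (j : ℂ))
          = 1 - (r j : ℂ) * Complex.I := by
      intro j
      simp only [hrdef]
      push_cast
      rw [div_div]
      ring
    have habs1 : ∀ j : ℕ, 1 ≤ ‖1 - (r j : ℂ) * Complex.I‖ := by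
      intro j
      have := Complex.abs_re_le_norm (1 - (r j : ℂ) * Complex.I)
      simpa using this
    have habs2 : ∀ j : ℕ, |r j| ≤ ‖1 - (r j : ℂ) * Complex.I‖ := by
      intro j
      have := Complex.abs_im_le_norm (1 - (r j : ℂ) * Complex.I)
      simpa using this
    have hpos : ∀ j : ℕ, 0 < ‖1 - (r j : ℂ) * Complex.I‖ := fun j =>
      lt_of_lt_of_le one_pos (habs1 j)
    have hle1 : ∀ j : ℕ, (‖1 - (r j : ℂ) * Complex.I‖)⁻¹ ≤ 1 := fun j =>
      inv_le_one_of_one_le₀ (habs1 j)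
    have hrval : ∀ j : ℕ, 0 < j → |r j| = 2 * Real.pi * |(k:ℝ)| / (|L| * j) := by
      intro j hj
      simp only [hrdef]
      rw [abs_div, abs_mul, abs_mul, abs_mul]
      rw [Nat.abs_cast, _root_.abs_of_nonneg (by norm_num : (0:ℝ) ≤ 2),
        _root_.abs_of_nonneg hπ.le]
    have hleinv : ∀ j : ℕ, 0 < j →
        (‖1 - (r j : ℂ) * Complex.I‖)⁻¹ ≤ |L| * j / (2 * Real.pi * |(k:ℝ)|) := by
      intro j hj
      have hr0 : 0 < |r j| := by
        rw [hrval j hj]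
        have : 0 < |L| := abs_pos.mpr hLne
        positivity
      have := inv_anti₀ hr0 (habs2 j)
      refine this.trans ?_
      rw [hrval j hj, inv_div]
    -- split the product
    have hsplit : Finset.Icc a n = insert a (insert (a+1) (Finset.Icc (a+2) n)) := by
      ext x
      simp only [Finset.mem_Icc, Finset.mem_insert]
      omega
    have hmem1 : a ∉ insert (a+1) (Finset.Icc (a+2) n) := by
      simp only [Finset.mem_insert, Finset.mem_Icc]
      omega
    have hmem2 : a + 1 ∉ Finset.Icc (a+2) n := by
      simp only [Finset.mem_Icc]
      omega
    have hfval : ‖f ⟨k, hk⟩‖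
        = ∏ j ∈ Finset.Icc a n, (‖1 - (r j : ℂ) * Complex.I‖)⁻¹ := by
      simp only [hfdef]
      rw [norm_prod]
      refine Finset.prod_congr rfl fun j _ => ?_
      rw [hfactor j, norm_inv]
    rw [hfval, hsplit, Finset.prod_insert hmem1, Finset.prod_insert hmem2]
    have htail : (∏ j ∈ Finset.Icc (a+2) n,
        (‖1 - (r j : ℂ) * Complex.I‖)⁻¹) ≤ 1 :=
      Finset.prod_le_one (fun j _ => by positivity) (fun j _ => hle1 j)
    have htail0 : 0 ≤ ∏ j ∈ Finset.Icc (a+2) n,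
        (‖1 - (r j : ℂ) * Complex.I‖)⁻¹ :=
      Finset.prod_nonneg fun j _ => by positivity
    have hA := hleinv a (by omega)
    have hB := hleinv (a+1) (by omega)
    push_cast at hB
    have hstep : (‖1 - (r a : ℂ) * Complex.I‖)⁻¹ *
        ((‖1 - (r (a+1) : ℂ) * Complex.I‖)⁻¹ *
          ∏ j ∈ Finset.Icc (a+2) n, (‖1 - (r j : ℂ) * Complex.I‖)⁻¹)
        ≤ (|L| * a / (2 * Real.pi * |(k:ℝ)|)) * ((|L| * (a+1) / (2 * Real.pi * |(k:ℝ)|)) * 1) := by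
      have h1 : 0 < |L| := abs_pos.mpr hLne
      have h0c : 0 ≤ (‖1 - (r (a+1) : ℂ) * Complex.I‖)⁻¹ *
          ∏ j ∈ Finset.Icc (a+2) n, (‖1 - (r j : ℂ) * Complex.I‖)⁻¹ :=
        mul_nonneg (inv_nonneg.2 (norm_nonneg _)) htail0
      have hb0 : 0 ≤ |L| * (a:ℝ) / (2 * Real.pi * |(k:ℝ)|) := by positivity
      have hB0 : 0 ≤ |L| * ((a:ℝ)+1) / (2 * Real.pi * |(k:ℝ)|) := by positivity
      exact mul_le_mul hA (mul_le_mul hB htail htail0 hB0) h0c hb0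
    refine hstep.trans (le_of_eq ?_)
    have hk2 : |(k:ℝ)| * |(k:ℝ)| = (k:ℝ) * (k:ℝ) := abs_mul_abs_self _
    have hL2 : |L| * |L| = L * L := abs_mul_abs_self _
    have hd1 : 0 < 2 * Real.pi * |(k:ℝ)| := mul_pos (by positivity) hkpos
    have hk2pos : 0 < (k:ℝ)^2 := by
      rw [← _root_.sq_abs]; exact pow_pos hkpos 2
    rw [mul_one, hCdef, div_div, div_mul_div_comm,
      div_eq_div_iff (mul_pos hd1 hd1).ne' (by positivity : (0:ℝ) < 4 * Real.pi ^ 2 * (k:ℝ)^2).ne']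
    linear_combination (4*Real.pi^2*(a:ℝ)*((a:ℝ)+1)*(k:ℝ)^2) * hL2
      - (4*Real.pi^2*(a:ℝ)*((a:ℝ)+1)*L^2) * hk2
  -- summability of the majorant
  have hsum_int : Summable (fun k : ℤ => C / ((k:ℝ))^2) := by
    have h := (Real.summable_one_div_int_pow (p := 2)).mpr (by norm_num)
    simpa [mul_one_div, div_eq_mul_inv] using h.mul_left C
  have hsum_sub : Summable (fun k : {k : ℤ // k ≠ 0} => C / (((k:ℤ):ℝ))^2) :=
    hsum_int.subtype _
  have hsumf : Summable (fun k : {k : ℤ // k ≠ 0} => ‖f k‖) :=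
    Summable.of_nonneg_of_le (fun k => norm_nonneg _) key hsum_sub
  -- Basel sums
  have hshift : HasSum (fun m : ℕ => (1:ℝ)/((m+1:ℕ):ℝ)^2) (Real.pi^2/6) := by
    refine (hasSum_nat_add_iff (f := fun m : ℕ => (1:ℝ)/((m:ℕ):ℝ)^2) 1).mpr ?_
    simpa using hasSum_zeta_two
  have hA' : HasSum (fun m : ℕ => (1:ℝ)/(((m:ℤ)):ℝ)^2) (Real.pi^2/6) := by
    convert hasSum_zeta_two using 2 with m
    simp
  have hB' : HasSum (fun m : ℕ => (1:ℝ)/(((-((m:ℤ)+1)):ℤ):ℝ)^2) (Real.pi^2/6) := by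
    convert hshift using 2 with m
    push_cast
    ring
  have hZ : HasSum (fun k : ℤ => (1:ℝ)/((k:ℝ))^2) (Real.pi^2/6 + Real.pi^2/6) :=
    HasSum.of_nat_of_neg_add_one hA' hB'
  have hZC : HasSum (fun k : ℤ => C / ((k:ℝ))^2) (C * (Real.pi^2/3)) := by
    have h := hZ.mul_left C
    simp only [mul_one_div] at h
    rw [show C * (Real.pi^2/3) = C * (Real.pi^2/6 + Real.pi^2/6) by ring]
    exact h
  have hts : (∑' k : {k : ℤ // k ≠ 0}, C / (((k:ℤ):ℝ))^2) = C * (Real.pi^2/3) := by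
    have hsupp : Function.support (fun k : ℤ => C / ((k:ℝ))^2) ⊆ {k : ℤ | k ≠ 0} := by
      intro k hk
      simp only [Function.mem_support] at hk
      intro h0
      apply hk
      rw [h0]
      norm_num
    have h := tsum_subtype_eq_of_support_subset (f := fun k : ℤ => C / ((k:ℝ))^2) hsupp
    exact h.trans hZC.tsum_eq
  -- final chain
  have hnorm : ‖∑' k, f k‖ ≤ ∑' k, ‖f k‖ := by
    have := norm_tsum_le_tsum_norm (f := f) hsumf
    simpa using this
  calc ‖∑' k, f k‖ ≤ ∑' k, ‖f k‖ := hnorm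
    _ ≤ ∑' k : {k : ℤ // k ≠ 0}, C / (((k:ℤ):ℝ))^2 := Summable.tsum_le_tsum key hsumf hsum_sub
    _ = C * (Real.pi^2/3) := hts
    _ ≤ ((a : ℝ) + 1) ^ 2 * L ^ 2 / 12 := by
        have hCval : C * (Real.pi^2/3) = (a:ℝ) * ((a:ℝ)+1) * L^2 / 12 := by
          rw [hCdef]
          field_simp
          ring
        rw [hCval]
        have hL2 : 0 ≤ L^2 := sq_nonneg L
        have haa : (0:ℝ) ≤ (a:ℝ) := by positivity
        nlinarith [hL2, haa]
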